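/- With B(f_m, f_n) = B(g_m, g_n) = (1/2)θ_m δ_{m,n} and B(f_m, g_n) = 0, the symmetric bilinear map U on diff_0(S^1) defined by B(U(x,y),z) = (1/2)(B([x,z]_m, y) + B(x, [y,z]_m)) satisfies U(f_n, f_n) = λ_{n,n} g_{2n}, U(f_n, g_n) = -λ_{n,n} f_{2n}, and U(g_n, g_n) = -λ_{n,n} g_{2n} for all n ≥ 1, where λ_{n,n} = 3nθ_n/(2θ_{2n}). -/
import Mathlib


/-- index type for the basis `{f_{k+1}} ∪ {g_{k+1}}` of `diff_0(S¹)`: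
`Sum.inl k` stands for `f_{k+1} = cos((k+1)t)`, `Sum.inr k` for `g_{k+1} = sin((k+1)t)`. -/
abbrev Idx := ℕ ⊕ ℕ

/-- `diff_0(S¹)`, modelled as the free vector space on the basis `{f_k, g_k : k ≥ 1}`. -/
abbrev V := Idx →₀ ℝ

/-- `f_k = cos(kt)` as an element of `diff_0(S¹)` (with `f_0` projected to `0`). -/
noncomputable def Fb : ℕ → V := fun k =>
  if k = 0 then 0 else Finsupp.single (Sum.inl (k - 1)) 1

/-- `g_k = sin(kt)` as an element of `diff_0(S¹)` (with `g_0 = 0`). -/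
noncomputable def Gb : ℕ → V := fun k =>
  if k = 0 then 0 else Finsupp.single (Sum.inr (k - 1)) 1

/-- `θ_k = 2hk + (c/12)(k³ - k)` -/
noncomputable def th (c h : ℝ) (k : ℤ) : ℝ := 2 * h * k + c / 12 * ((k : ℝ) ^ 3 - k)

/-- `λ_{m,n} = (2n+m)θ_m / (2θ_{m+n})` -/
noncomputable def lam (c h : ℝ) (m n : ℤ) : ℝ :=
  (2 * (n : ℝ) + m) * th c h m / (2 * th c h (m + n))

/-- `|M - N|` for natural numbers -/
def dN (M N : ℕ) : ℕ := max M N - min M N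

/-- `sign (M - N)` -/
noncomputable def sg (M N : ℕ) : ℝ := if N < M then 1 else -1

/-- the projected bracket `[·,·]_m` on basis elements, given by
`[f_M, f_N]_m = ((M-N)/2) g_{M+N} + ((M+N)/2) sign(M-N) g_{|M-N|}`,
`[g_M, g_N]_m = ((N-M)/2) g_{M+N} + ((M+N)/2) sign(M-N) g_{|M-N|}`,
`[f_M, g_N]_m = ((N-M)/2) f_{M+N} + ((M+N)/2) f_{|M-N|}` (the `f_0` term being projected away),
and `[g_M, f_N]_m = -[f_N, g_M]_m`. -/
noncomputable def brB : Idx → Idx → V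
  | Sum.inl m, Sum.inl n =>
      (((m : ℝ) - n) / 2) • Gb (m + n + 2)
        + (((m : ℝ) + n + 2) / 2 * sg (m + 1) (n + 1)) • Gb (dN (m + 1) (n + 1))
  | Sum.inl m, Sum.inr n =>
      (((n : ℝ) - m) / 2) • Fb (m + n + 2)
        + (((m : ℝ) + n + 2) / 2) • Fb (dN (m + 1) (n + 1))
  | Sum.inr m, Sum.inl n =>
      -((((m : ℝ) - n) / 2) • Fb (m + n + 2)
        + (((m : ℝ) + n + 2) / 2) • Fb (dN (m + 1) (n + 1)))
  | Sum.inr m, Sum.inr n =>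
      (((n : ℝ) - m) / 2) • Gb (m + n + 2)
        + (((m : ℝ) + n + 2) / 2 * sg (m + 1) (n + 1)) • Gb (dN (m + 1) (n + 1))

/-- bilinear extension of a map given on basis elements -/
noncomputable def bil (φ : Idx → Idx → V) (x y : V) : V :=
  x.sum fun i a => y.sum fun j b => (a * b) • φ i j

/-- the projected (mean-zero) bracket `[·,·]_m` on `diff_0(S¹)` -/
noncomputable def brm : V → V → V := bil brB

/-- the inner product `B` on basis elements: `B(f_M, f_N) = B(g_M, g_N) = (θ_M/2)δ_{M,N}`,
`B(f_M, g_N) = 0`. -/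
noncomputable def ipB (c h : ℝ) : Idx → Idx → ℝ
  | Sum.inl m, Sum.inl n => if m = n then th c h (m + 1) / 2 else 0
  | Sum.inr m, Sum.inr n => if m = n then th c h (m + 1) / 2 else 0
  | _, _ => 0

/-- the inner product `B(f,g) = ω_{c,h}(f, Jg)` on `diff_0(S¹)` -/
noncomputable def Bf (c h : ℝ) (x y : V) : ℝ :=
  x.sum fun i a => y.sum fun j b => a * b * ipB c h i j

-- helpers
noncomputable def wt (c h : ℝ) : Idx → ℝ
  | Sum.inl m => th c h (m + 1) / 2
  | Sum.inr m => th c h (m + 1) / 2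

lemma th_pos {c h : ℝ} (hc : 0 < c) (hh : 0 < h) {k : ℤ} (hk : 1 ≤ k) :
    0 < th c h k := by
  have h1 : (1 : ℝ) ≤ (k : ℝ) := by exact_mod_cast hk
  have hA : 0 ≤ (k : ℝ) ^ 3 - k := by
    nlinarith [mul_nonneg (mul_nonneg (show (0:ℝ) ≤ (k:ℝ) by linarith)
      (show (0:ℝ) ≤ (k:ℝ) - 1 by linarith)) (show (0:ℝ) ≤ (k:ℝ) + 1 by linarith)]
  have hB : 0 < 2 * h * (k : ℝ) := by nlinarith
  have hC : 0 ≤ c / 12 * ((k : ℝ) ^ 3 - k) := mul_nonneg (by positivity) hA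
  unfold th; linarith

lemma wt_pos {c h : ℝ} (hc : 0 < c) (hh : 0 < h) (j : Idx) : 0 < wt c h j := by
  cases j with
  | inl k => exact div_pos (th_pos hc hh (by omega)) two_pos
  | inr k => exact div_pos (th_pos hc hh (by omega)) two_pos

lemma ipB_eq (c h : ℝ) (i j : Idx) : ipB c h i j = if i = j then wt c h i else 0 := by
  cases i <;> cases j <;> simp [ipB, wt]

lemma Bf_apply_single (c h : ℝ) (x : V) (j : Idx) :
    Bf c h x (Finsupp.single j 1) = x j * wt c h j := by
  unfold Bf
  have h1 : ∀ i a, (Finsupp.single j (1:ℝ)).sum (fun j' b => a * b * ipB c h i j')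
      = if i = j then x i * 0 + a * wt c h i else 0 := by
    intro i a
    rw [Finsupp.sum_single_index (by simp)]
    rw [ipB_eq]
    split <;> ring
  simp only [h1]
  rw [Finsupp.sum_ite_eq']
  split
  · ring
  · next hj => rw [Finsupp.notMem_support_iff.mp hj]; ring

lemma Bf_single_apply (c h : ℝ) (y : V) (i : Idx) :
    Bf c h (Finsupp.single i 1) y = y i * wt c h i := by
  unfold Bf
  rw [Finsupp.sum_single_index (by simp)]
  have h1 : ∀ j b, (1:ℝ) * b * ipB c h i j = if i = j then y i * 0 + b * wt c h i else 0 := by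
    intro j b
    rw [ipB_eq]
    split <;> ring
  simp only [h1]
  rw [Finsupp.sum_ite_eq]
  split
  · ring
  · next hj => rw [Finsupp.notMem_support_iff.mp hj]; ring

lemma Bf_ext {c h : ℝ} (hc : 0 < c) (hh : 0 < h) {x y : V}
    (H : ∀ j : Idx, Bf c h x (Finsupp.single j 1) = Bf c h y (Finsupp.single j 1)) : x = y := by
  ext j
  have := H j
  rw [Bf_apply_single, Bf_apply_single] at this
  exact mul_right_cancel₀ (ne_of_gt (wt_pos hc hh j)) this

lemma brm_ss (i j : Idx) : brm (Finsupp.single i 1) (Finsupp.single j 1) = brB i j := by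
  unfold brm bil
  rw [Finsupp.sum_single_index]
  · rw [Finsupp.sum_single_index] <;> simp
  · simp

lemma Fb_inl (d k : ℕ) : Fb d (Sum.inl k) = if d = k + 1 then 1 else 0 := by
  rcases d with _ | d
  · simp [Fb]
  · simp [Fb, Finsupp.single_apply]

lemma Fb_inr (d k : ℕ) : Fb d (Sum.inr k) = 0 := by
  rcases d with _ | d <;> simp [Fb, Finsupp.single_apply]

lemma Gb_inr (d k : ℕ) : Gb d (Sum.inr k) = if d = k + 1 then 1 else 0 := by
  rcases d with _ | d
  · simp [Gb]
  · simp [Gb, Finsupp.single_apply]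

lemma Gb_inl (d k : ℕ) : Gb d (Sum.inl k) = 0 := by
  rcases d with _ | d <;> simp [Gb, Finsupp.single_apply]


/-- The symmetric bilinear map `U` defined by
`B(U(x,y),z) = (1/2)(B([x,z]_m, y) + B(x, [y,z]_m))` satisfies
`U(f_n, f_n) = λ_{n,n} g_{2n}`, `U(f_n, g_n) = -λ_{n,n} f_{2n}`,
`U(g_n, g_n) = -λ_{n,n} g_{2n}`, where `λ_{n,n} = 3nθ_n/(2θ_{2n})`. -/
theorem U_diagonal (c h : ℝ) (hc : 0 < c) (hh : 0 < h) (U : V → V → V)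
    (hU : ∀ x y z : V,
      Bf c h (U x y) z = (1/2) * (Bf c h (brm x z) y + Bf c h x (brm y z)))
    (n : ℕ) (hn : 1 ≤ n) :
    U (Fb n) (Fb n) = lam c h n n • Gb (2 * n) ∧
    U (Fb n) (Gb n) = (-lam c h n n) • Fb (2 * n) ∧
    U (Gb n) (Gb n) = (-lam c h n n) • Gb (2 * n) ∧
    lam c h n n = 3 * n * th c h n / (2 * th c h (2 * n)) := by
  obtain ⟨m, rfl⟩ : ∃ m, n = m + 1 := ⟨n - 1, by omega⟩
  have hF : Fb (m+1) = Finsupp.single (Sum.inl m) 1 := by simp [Fb]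
  have hG : Gb (m+1) = Finsupp.single (Sum.inr m) 1 := by simp [Gb]
  have hne : th c h (((m:ℤ)+1) + ((m:ℤ)+1)) ≠ 0 := ne_of_gt (th_pos hc hh (by omega))
  have hdn : dN (m+1) (2*m+1+1) = m+1 := by unfold dN; omega
  have hsg : sg (m+1) (2*m+1+1) = -1 := by unfold sg; rw [if_neg (by omega)]
  refine ⟨?_, ?_, ?_, ?_⟩
  · refine Bf_ext hc hh fun j => ?_
    rw [hU, hF, brm_ss]
    simp only [Bf_apply_single, Bf_single_apply]
    cases j with
    | inl k =>
      simp [brB, Gb_inl, Fb_inl, Finsupp.add_apply, Finsupp.smul_apply]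
    | inr k =>
      by_cases hk : k = 2*m+1
      · subst hk
        have h1 : ¬ (m + (2*m+1) + 2 = m + 1) := by omega
        have h2 : (2*(m+1) = 2*m+1+1) := by omega
        simp only [brB, Finsupp.add_apply, Finsupp.smul_apply, Fb_inl, Gb_inr, smul_eq_mul,
          hdn, h2, if_pos rfl, if_neg h1, wt, lam]
        push_cast
        field_simp
        ring
      · have h1 : ¬ (m + k + 2 = m + 1) := by omega
        have h2 : ¬ (dN (m+1) (k+1) = m+1) := by unfold dN; omega
        have h3 : ¬ (2*(m+1) = k+1) := by omega
        simp [brB, Finsupp.add_apply, Finsupp.smul_apply, Fb_inl, Gb_inr, h1, h2, h3]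
  · refine Bf_ext hc hh fun j => ?_
    rw [hU, hF, hG, brm_ss, brm_ss]
    simp only [Bf_apply_single, Bf_single_apply]
    cases j with
    | inl k =>
      by_cases hk : k = 2*m+1
      · subst hk
        have h1 : ¬ (m + (2*m+1) + 2 = m + 1) := by omega
        have h2 : (2*(m+1) = 2*m+1+1) := by omega
        simp only [brB, Finsupp.add_apply, Finsupp.smul_apply, Finsupp.neg_apply,
          Fb_inl, Fb_inr, Gb_inl, Gb_inr, smul_eq_mul,
          hdn, hsg, h2, if_pos rfl, if_neg h1, wt, lam]
        push_cast
        field_simp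
        ring
      · have h1 : ¬ (m + k + 2 = m + 1) := by omega
        have h2 : ¬ (dN (m+1) (k+1) = m+1) := by unfold dN; omega
        have h3 : ¬ (2*(m+1) = k+1) := by omega
        simp [brB, Finsupp.add_apply, Finsupp.smul_apply, Finsupp.neg_apply,
          Fb_inl, Fb_inr, Gb_inl, Gb_inr, h1, h2, h3]
    | inr k =>
      simp [brB, Finsupp.add_apply, Finsupp.smul_apply, Finsupp.neg_apply,
        Fb_inr, Gb_inl]
  · refine Bf_ext hc hh fun j => ?_
    rw [hU, hG, brm_ss]
    simp only [Bf_apply_single, Bf_single_apply]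
    cases j with
    | inl k =>
      simp [brB, Fb_inr, Gb_inl, Finsupp.add_apply, Finsupp.smul_apply, Finsupp.neg_apply]
    | inr k =>
      by_cases hk : k = 2*m+1
      · subst hk
        have h1 : ¬ (m + (2*m+1) + 2 = m + 1) := by omega
        have h2 : (2*(m+1) = 2*m+1+1) := by omega
        simp only [brB, Finsupp.add_apply, Finsupp.smul_apply, Gb_inr, smul_eq_mul,
          hdn, hsg, h2, if_pos rfl, if_neg h1, wt, lam]
        push_cast
        field_simp
        ring
      · have h1 : ¬ (m + k + 2 = m + 1) := by omega
        have h2 : ¬ (dN (m+1) (k+1) = m+1) := by unfold dN; omega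
        have h3 : ¬ (2*(m+1) = k+1) := by omega
        simp [brB, Finsupp.add_apply, Finsupp.smul_apply, Gb_inr, h1, h2, h3]
  · rw [lam, show ((m+1:ℕ):ℤ) + ((m+1:ℕ):ℤ) = 2*((m+1:ℕ):ℤ) from by ring]
    push_cast
    ring
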